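/- arXiv:1109.4812 — 8 statements merged into one kernel-verified Lean document; each statement's English description precedes it below -/
import Mathlib

section
/- The 1-point correlation of the D-ary tree measure has the expansion <φ̄>_c = Σ_{q≥0} (1/(Dq+1)) * binomial(Dq+1, q) * J^{(D-1)q+1} * g^q; equivalently, the ratio of the two series Σ_q binomial(Dq+1,q) J^{(D-1)q+1} g^q and Σ_q binomial(Dq,q) J^{(D-1)q} g^q equals Σ_q (1/(Dq+1)) binomial(Dq+1,q) J^{(D-1)q+1} g^q as formal power series in g (for the appropriate coefficient identity). -/
lemma keyQ (x a b r n d : ℚ) (hx : x = d * (n + 1) + r) (hb : b * (n + 1) = a * (x - n))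
    (hx0 : x ≠ 0) (hx1 : x + 1 ≠ 0) (hn1 : (n : ℚ) + 1 ≠ 0) :
    (r + 1) / (x + 1) * (a + b) = r / x * b + (r + d) / x * a := by
  have h2 : ((r + 1) * x * (a + b)) * (n + 1) = ((r * b + (r + d) * a) * (x + 1)) * (n + 1) := by
    linear_combination (x - r) * hb + a * (x + 1) * hx
  have h3 := mul_right_cancel₀ hn1 h2
  field_simp
  linear_combination h3

/-- Fuss–Catalan-type numbers `f(r,n) = r/(Dn+r) * C(Dn+r, n)` over ℚ. -/
noncomputable def fc (D r n : ℕ) : ℚ :=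
  (r : ℚ) / ((D * n + r : ℕ) : ℚ) * (((D * n + r).choose n : ℕ) : ℚ)

lemma fc_zero (D n : ℕ) : fc D 0 n = 0 := by simp [fc]

lemma fc_r_zero (D r : ℕ) (hr : 1 ≤ r) : fc D r 0 = 1 := by
  have h : (r : ℚ) ≠ 0 := by exact_mod_cast Nat.one_le_iff_ne_zero.mp hr
  simp [fc, h]

lemma fcR (D : ℕ) (hD : 1 ≤ D) (r n : ℕ) :
    fc D (r + 1) (n + 1) = fc D r (n + 1) + fc D (r + D) n := by
  have h1 : D * (n + 1) + (r + 1) = (D * (n + 1) + r) + 1 := by ring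
  have h2 : D * n + (r + D) = D * (n + 1) + r := by ring
  rw [fc, fc, fc, h1, h2]
  set N := D * (n + 1) + r with hN
  have hnN : n ≤ N := by
    have : n + 1 ≤ D * (n + 1) := Nat.le_mul_of_pos_left _ hD
    omega
  have hNpos : 0 < N := by
    have : 0 < D * (n + 1) := Nat.mul_pos hD (Nat.succ_pos n)
    omega
  have hpas : (((N + 1).choose (n + 1) : ℕ) : ℚ) = (N.choose n : ℚ) + (N.choose (n + 1) : ℚ) := by
    rw [Nat.choose_succ_succ]; push_cast; ring
  have hrat : (N.choose (n + 1) : ℚ) * ((n : ℚ) + 1) = (N.choose n : ℚ) * ((N : ℚ) - n) := by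
    have h := Nat.choose_succ_right_eq N n
    have hc : ((N - n : ℕ) : ℚ) = (N : ℚ) - n := by
      rw [Nat.cast_sub hnN]
    calc (N.choose (n + 1) : ℚ) * ((n : ℚ) + 1)
        = ((N.choose (n + 1) * (n + 1) : ℕ) : ℚ) := by push_cast; ring
      _ = ((N.choose n * (N - n) : ℕ) : ℚ) := by rw [h]
      _ = (N.choose n : ℚ) * ((N : ℚ) - n) := by rw [Nat.cast_mul, hc]
  have hNQ : (N : ℚ) = (D : ℚ) * ((n : ℚ) + 1) + r := by rw [hN]; push_cast; ring
  have hN0 : (N : ℚ) ≠ 0 := by exact_mod_cast hNpos.ne'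
  have hN1 : ((N : ℚ) + 1) ≠ 0 := by positivity
  have hn1 : ((n : ℚ) + 1) ≠ 0 := by positivity
  push_cast
  rw [hpas]
  exact keyQ (N : ℚ) _ _ _ _ _ hNQ hrat hN0 hN1 hn1

lemma conv (D : ℕ) (hD : 1 ≤ D) :
    ∀ n r, 1 ≤ r →
      (∑ k ∈ Finset.range (n + 1), fc D r k * fc D 1 (n - k)) = fc D (r + 1) n := by
  intro n
  induction n with
  | zero =>
      intro r hr
      simp [fc_r_zero D r hr, fc_r_zero D 1 le_rfl, fc_r_zero D (r + 1) (by omega)]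
  | succ n ih =>
      intro r hr
      induction r, hr using Nat.le_induction with
      | base =>
          rw [Finset.sum_range_succ']
          have hshift : ∀ k, fc D 1 (k + 1) = fc D D k := by
            intro k
            have := fcR D hD 0 k
            simpa [fc_zero] using this
          have : (∑ k ∈ Finset.range (n + 1), fc D 1 (k + 1) * fc D 1 (n + 1 - (k + 1)))
              = fc D (D + 1) n := by
            rw [← ih D hD]
            refine Finset.sum_congr rfl fun k hk => ?_
            rw [hshift k, Nat.succ_sub_succ]
          rw [this, fc_r_zero D 1 le_rfl, Nat.sub_zero]
          have := fcR D hD 1 n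
          rw [this]
          ring_nf
      | succ r hr ihr =>
          rw [Finset.sum_range_succ']
          have hsplit : (∑ k ∈ Finset.range (n + 1), fc D (r + 1) (k + 1) * fc D 1 (n + 1 - (k + 1)))
              = (∑ k ∈ Finset.range (n + 1), fc D r (k + 1) * fc D 1 (n - k))
                + (∑ k ∈ Finset.range (n + 1), fc D (r + D) k * fc D 1 (n - k)) := by
            rw [← Finset.sum_add_distrib]
            refine Finset.sum_congr rfl fun k hk => ?_
            rw [fcR D hD r k, Nat.succ_sub_succ]; ring
          rw [hsplit]
          have hfirst : (∑ k ∈ Finset.range (n + 1), fc D r (k + 1) * fc D 1 (n - k))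
              = fc D (r + 1) (n + 1) - fc D 1 (n + 1) := by
            have h := ihr
            rw [Finset.sum_range_succ'] at h
            have hk0 : fc D r 0 * fc D 1 (n + 1 - 0) = fc D 1 (n + 1) := by
              rw [fc_r_zero D r hr, Nat.sub_zero, one_mul]
            have : (∑ k ∈ Finset.range (n + 1), fc D r (k + 1) * fc D 1 (n + 1 - (k + 1)))
                = (∑ k ∈ Finset.range (n + 1), fc D r (k + 1) * fc D 1 (n - k)) := by
              refine Finset.sum_congr rfl fun k hk => by rw [Nat.succ_sub_succ]
            rw [this, hk0] at h
            linarith [h]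
          rw [hfirst, ih (r + D) (by omega), fc_r_zero D (r + 1) (by omega), Nat.sub_zero, one_mul]
          have h1 := fcR D hD (r + 1) n
          have h2 : r + D + 1 = r + 1 + D := by ring
          rw [h2] at *
          rw [h1]
          ring

lemma fc_one (D m : ℕ) : fc D 1 m = (((D * m + 1).choose m : ℕ) : ℚ) / ((D * m + 1 : ℕ) : ℚ) := by
  rw [fc]; ring

lemma nat_sub_helper (D k c : ℕ) (hD : 1 ≤ D) : D * k + c + 1 - k = (D - 1) * k + c + 1 := by
  have h1 : (D - 1) * k = D * k - 1 * k := Nat.sub_mul D 1 k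
  have h2 : k ≤ D * k := Nat.le_mul_of_pos_left k hD
  rw [one_mul] at h1
  omega

lemma choose_fc (D k : ℕ) (hD : 1 ≤ D) :
    (((D * k).choose k : ℕ) : ℚ) = ((((D - 1) * k + 1 : ℕ)) : ℚ) * fc D 1 k := by
  have h := Nat.choose_mul_succ_eq (D * k) k
  have hsub : D * k + 1 - k = (D - 1) * k + 1 := by
    have := nat_sub_helper D k 0 hD; omega
  rw [hsub] at h
  have hpos : ((D * k + 1 : ℕ) : ℚ) ≠ 0 := by positivity
  have hq : (((D * k).choose k : ℕ) : ℚ) * ((D * k + 1 : ℕ) : ℚ)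
      = (((D * k + 1).choose k : ℕ) : ℚ) * ((((D - 1) * k + 1 : ℕ)) : ℚ) := by
    exact_mod_cast congrArg (Nat.cast (R := ℚ)) h
  have hD1 : ((D - 1 : ℕ) : ℚ) = (D : ℚ) - 1 := by
    rw [Nat.cast_sub hD]; simp
  rw [fc_one]
  push_cast [hD1] at hq ⊢
  field_simp
  linear_combination hq

lemma final_ratio (D q : ℕ) (hD : 1 ≤ D) :
    ((((D - 1) * q + 2 : ℕ)) : ℚ) * fc D 2 q = 2 * (((D * q + 1).choose q : ℕ) : ℚ) := by
  have h := Nat.choose_mul_succ_eq (D * q + 1) q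
  have hsub : D * q + 1 + 1 - q = (D - 1) * q + 2 := by
    have := nat_sub_helper D q 1 hD; omega
  rw [hsub] at h
  have hq : (((D * q + 1).choose q : ℕ) : ℚ) * ((D * q + 2 : ℕ) : ℚ)
      = (((D * q + 2).choose q : ℕ) : ℚ) * ((((D - 1) * q + 2 : ℕ)) : ℚ) := by
    have : D * q + 1 + 1 = D * q + 2 := by ring
    rw [this] at h
    exact_mod_cast congrArg (Nat.cast (R := ℚ)) h
  have hpos : ((D * q + 2 : ℕ) : ℚ) ≠ 0 := by positivity
  have hD1 : ((D - 1 : ℕ) : ℚ) = (D : ℚ) - 1 := by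
    rw [Nat.cast_sub hD]; simp
  rw [fc]
  push_cast [hD1] at hq ⊢
  field_simp
  linear_combination (-1 : ℚ) * hq

lemma A0 (D q : ℕ) (hD : 1 ≤ D) :
    ∑ k ∈ Finset.range (q + 1), (((D * k).choose k : ℕ) : ℚ) * fc D 1 (q - k)
      = (((D * q + 1).choose q : ℕ) : ℚ) := by
  have hS : ∑ k ∈ Finset.range (q + 1), fc D 1 k * fc D 1 (q - k) = fc D 2 q :=
    conv D hD q 1 le_rfl
  set T : ℚ := ∑ k ∈ Finset.range (q + 1), (k : ℚ) * (fc D 1 k * fc D 1 (q - k)) with hT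
  have hrefl : ∑ k ∈ Finset.range (q + 1), ((q : ℚ) - k) * (fc D 1 k * fc D 1 (q - k)) = T := by
    rw [hT, ← Finset.sum_range_reflect (fun k => (k : ℚ) * (fc D 1 k * fc D 1 (q - k))) (q + 1)]
    refine Finset.sum_congr rfl fun k hk => ?_
    have hkq : k ≤ q := Nat.lt_succ_iff.mp (Finset.mem_range.mp hk)
    have h1 : q + 1 - 1 - k = q - k := by omega
    have h2 : q - (q - k) = k := by omega
    have h3 : ((q - k : ℕ) : ℚ) = (q : ℚ) - k := by
      rw [Nat.cast_sub hkq]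
    rw [h1, h2, h3]
    ring
  have h2T : 2 * T = (q : ℚ) * fc D 2 q := by
    have : T + T = (q : ℚ) * fc D 2 q := by
      nth_rewrite 2 [← hrefl]
      rw [hT, ← Finset.sum_add_distrib, ← hS, Finset.mul_sum]
      refine Finset.sum_congr rfl fun k hk => by ring
    linarith
  have hLHS : ∑ k ∈ Finset.range (q + 1), (((D * k).choose k : ℕ) : ℚ) * fc D 1 (q - k)
      = (((D - 1 : ℕ)) : ℚ) * T + fc D 2 q := by
    rw [hT, Finset.mul_sum, ← hS, ← Finset.sum_add_distrib]
    refine Finset.sum_congr rfl fun k hk => ?_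
    rw [choose_fc D k hD]
    push_cast
    ring
  rw [hLHS]
  have hfin := final_ratio D q hD
  have hcast : ((((D - 1) * q + 2 : ℕ)) : ℚ) = (((D - 1 : ℕ)) : ℚ) * (q : ℚ) + 2 := by
    push_cast; ring
  rw [hcast] at hfin
  linear_combination ((1 : ℚ) / 2) * hfin + (((D - 1 : ℕ) : ℚ) / 2) * h2T

/-- The connected 1-point function of the `D`-ary tree measure:
the unnormalized 1-point series `Σ_q binom(Dq+1,q) J^((D-1)q+1) g^q` equals the product of
the partition function `Σ_q binom(Dq,q) J^((D-1)q) g^q` and the connected 1-point series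
`Σ_q (1/(Dq+1)) binom(Dq+1,q) J^((D-1)q+1) g^q`, as formal power series in `g`. -/
theorem dary_tree_one_point (D : ℕ) (hD : 1 ≤ D) (J : ℚ) :
    (PowerSeries.mk fun q => (Nat.choose (D * q + 1) q : ℚ) * J ^ ((D - 1) * q + 1)) =
      (PowerSeries.mk fun q => (Nat.choose (D * q) q : ℚ) * J ^ ((D - 1) * q)) *
      (PowerSeries.mk fun q =>
        ((Nat.choose (D * q + 1) q : ℚ) / (D * q + 1)) * J ^ ((D - 1) * q + 1)) := by
  ext q
  rw [PowerSeries.coeff_mk, PowerSeries.coeff_mul,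
    Finset.Nat.sum_antidiagonal_eq_sum_range_succ_mk]
  simp only [PowerSeries.coeff_mk]
  have hterm : ∀ k ∈ Finset.range (q + 1),
      (Nat.choose (D * k) k : ℚ) * J ^ ((D - 1) * k) *
        ((Nat.choose (D * (q - k) + 1) (q - k) : ℚ) / ((D : ℚ) * ((q - k : ℕ) : ℚ) + 1) *
          J ^ ((D - 1) * (q - k) + 1))
      = ((((D * k).choose k : ℕ) : ℚ) * fc D 1 (q - k)) * J ^ ((D - 1) * q + 1) := by
    intro k hk
    have hkq : k ≤ q := Nat.lt_succ_iff.mp (Finset.mem_range.mp hk)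
    obtain ⟨m, rfl⟩ := Nat.exists_eq_add_of_le hkq
    have hm : k + m - k = m := by omega
    rw [hm]
    have hexp : (D - 1) * k + ((D - 1) * m + 1) = (D - 1) * (k + m) + 1 := by ring
    have hfc : (Nat.choose (D * m + 1) m : ℚ) / ((D : ℚ) * m + 1) = fc D 1 m := by
      rw [fc_one]
      push_cast
      ring
    rw [← hfc]
    rw [← hexp, pow_add]
    ring
  rw [Finset.sum_congr rfl hterm, ← Finset.sum_mul, A0 D q hD]
end

section
/- For a closed (D+1)-colored graph G with 2p vertices, the total number of faces satisfies |F_G| = (D(D-1)/2) p + D - (2/(D-1)!) ω(G), where ω(G) is the sum of the genera of all jackets of G. -/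
/-- For a closed `(D+1)`-colored graph `G` with `2p` vertices, the total number of faces
satisfies `|F_G| = (D(D-1)/2) p + D - (2/(D-1)!) ω(G)`, where `ω(G)` is the sum of the
genera of all `D!/2` jackets, each jacket has `(D-1)p + 2 - 2g_J` faces, and each face of
`G` belongs to exactly `(D-1)!` jackets. -/
theorem total_face_count (D p F ω : ℕ) (hD : 2 ≤ D)
    (ι : Type) [Fintype ι] (g FJ : ι → ℕ)
    (hcard : Fintype.card ι = D.factorial / 2)
    (hFJ : ∀ J, (FJ J : ℤ) = ((D : ℤ) - 1) * p + 2 - 2 * g J)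
    (hdouble : (D - 1).factorial * F = ∑ J, FJ J)
    (hω : ω = ∑ J, g J) :
    (F : ℚ) = (D : ℚ) * ((D : ℚ) - 1) / 2 * p + D
      - 2 / ((D - 1).factorial : ℚ) * ω := by
  have hN : ((D - 1).factorial : ℚ) ≠ 0 := by
    exact_mod_cast (Nat.factorial_pos _).ne'
  have h2 : (2 : ℕ) ∣ D.factorial := Nat.dvd_factorial (by norm_num) hD
  have hfac : (D.factorial : ℚ) = D * (D - 1).factorial := by
    exact_mod_cast (congrArg (Nat.cast : ℕ → ℚ)
      (Nat.mul_factorial_pred (show D ≠ 0 by omega))).symm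
  have hcardQ : (Fintype.card ι : ℚ) = (D.factorial : ℚ) / 2 := by
    rw [hcard, Nat.cast_div h2 (by norm_num)]; norm_num
  have hsum : (∑ J, (FJ J : ℚ)) =
      (Fintype.card ι : ℚ) * (((D : ℚ) - 1) * p + 2) - 2 * ω := by
    have : ∀ J, (FJ J : ℚ) = ((D : ℚ) - 1) * p + 2 - 2 * g J := by
      intro J
      exact_mod_cast congrArg (Int.cast : ℤ → ℚ) (hFJ J)
    rw [Finset.sum_congr rfl (fun J _ => this J), Finset.sum_sub_distrib,
      Finset.sum_const, ← Finset.mul_sum, hω]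
    push_cast [Fintype.card]
    ring
  have hd : ((D - 1).factorial : ℚ) * F = ∑ J, (FJ J : ℚ) := by
    exact_mod_cast congrArg (Nat.cast : ℕ → ℚ) hdouble
  rw [hsum, hcardQ, hfac] at hd
  have hDQ : ((D : ℚ) - 1) = ((D - 1 : ℕ) : ℚ) := by
    have : ((D - 1 : ℕ) : ℚ) = (D : ℚ) - 1 := by
      push_cast [Nat.cast_sub (by omega : 1 ≤ D)]; ring
    exact this.symm
  field_simp at hd ⊢
  linarith [hd]
end

section
/- The degree of a closed (D+1)-colored graph G with 2p vertices satisfies ω(G) = ((D-1)!/2)(p + D - B^{[D]}) + Σ_{i,ρ} ω(B^{î}_{(ρ)}), where B^{[D]} is the number of D-bubbles of G and the sum is over all D-bubbles with their degrees. In particular if ω(G)=0 then all D-bubbles have degree 0 and p + D = B^{[D]}. -/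
/-- The degree of a closed `(D+1)`-colored graph `G` with `2p` vertices and its `D`-bubbles
satisfy `ω(G) = ((D-1)!/2)(p + D - B^{[D]}) + Σ_{i,ρ} ω(B^{î}_{(ρ)})`; in particular if
`ω(G) = 0` then all bubbles have degree `0` and `p + D = B^{[D]}`.
The bubbles are indexed by `β`; `2 pb b` is the vertex count, `ωb b` the degree and
`Fb b` the face count of bubble `b`; the stated counting facts are the hypotheses. -/
theorem degree_bubble_relation (D p B F ω : ℕ) (hD : 2 ≤ D)
    (β : Type) [Fintype β] (pb ωb Fb : β → ℕ)
    (hB : Fintype.card β = B)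
    (hvert : ∑ b, pb b = (D + 1) * p)
    (hface : ∑ b, Fb b = (D - 1) * F)
    (hFb : ∀ b, (Fb b : ℚ) =
      ((D : ℚ) - 1) * ((D : ℚ) - 2) / 2 * pb b + ((D : ℚ) - 1)
        - 2 / ((D - 2).factorial : ℚ) * ωb b)
    (hF : (F : ℚ) = (D : ℚ) * ((D : ℚ) - 1) / 2 * p + D
        - 2 / ((D - 1).factorial : ℚ) * ω)
    (hpB : B ≤ p + D) :
    (ω : ℚ) = ((D - 1).factorial : ℚ) / 2 * ((p : ℚ) + D - B) + ∑ b, (ωb b : ℚ) ∧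
      (ω = 0 → (∀ b, ωb b = 0) ∧ p + D = B) := by
  obtain ⟨d, rfl⟩ : ∃ d, D = d + 2 := ⟨D - 2, by omega⟩
  have h21 : d + 2 - 1 = d + 1 := rfl
  have h22 : d + 2 - 2 = d := rfl
  rw [h21] at hface hF ⊢
  rw [h22] at hFb
  have hq : (d.factorial : ℚ) ≠ 0 := Nat.cast_ne_zero.mpr d.factorial_pos.ne'
  have hq1 : ((d + 1).factorial : ℚ) ≠ 0 := Nat.cast_ne_zero.mpr (d+1).factorial_pos.ne'
  have hfct : (((d + 1).factorial : ℕ) : ℚ) = ((d : ℚ) + 1) * (d.factorial : ℚ) := by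
    rw [Nat.factorial_succ]; push_cast; ring
  -- sum the bubble face formula
  have hS : (∑ b, (Fb b : ℚ)) =
      ((d : ℚ) + 1) * (d : ℚ) / 2 * (∑ b, (pb b : ℚ))
        + (B : ℚ) * ((d : ℚ) + 1) - 2 / (d.factorial : ℚ) * (∑ b, (ωb b : ℚ)) := by
    have h0 : (∑ b, (Fb b : ℚ)) =
        ∑ b, (((d : ℚ) + 1) * (d : ℚ) / 2 * (pb b : ℚ) + ((d : ℚ) + 1)
          - 2 / (d.factorial : ℚ) * (ωb b : ℚ)) := by
      refine Finset.sum_congr rfl fun b _ => ?_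
      have := hFb b
      push_cast at this ⊢
      linarith
    rw [h0, Finset.sum_sub_distrib, Finset.sum_add_distrib, ← Finset.mul_sum,
      ← Finset.mul_sum, Finset.sum_const]
    simp only [Finset.card_univ, hB, nsmul_eq_mul]
  have hfaceQ : (∑ b, (Fb b : ℚ)) = ((d : ℚ) + 1) * (F : ℚ) := by
    have h1 := congrArg (fun n : ℕ => (n : ℚ)) hface
    push_cast at h1
    linarith
  have hvertQ : (∑ b, (pb b : ℚ)) = ((d : ℚ) + 3) * (p : ℚ) := by
    have h1 := congrArg (fun n : ℕ => (n : ℚ)) hvert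
    push_cast at h1
    linarith
  rw [hvertQ] at hS
  field_simp at hF hS
  rw [hfct] at hF
  push_cast at hF
  have key : (ω : ℚ) = ((d : ℚ) + 1) * (d.factorial : ℚ) / 2 *
      ((p : ℚ) + ((d : ℚ) + 2) - (B : ℚ)) + ∑ b, (ωb b : ℚ) := by
    linear_combination (1/4 : ℚ) * hF - (1/4 : ℚ) * hS
      + ((d.factorial : ℚ) / 2) * hfaceQ
  rw [hfct]
  push_cast
  push_cast at key
  constructor
  · linarith
  · intro hω
    subst hω
    simp only [Nat.cast_zero] at key
    have hnn : (0 : ℚ) ≤ ∑ b, (ωb b : ℚ) :=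
      Finset.sum_nonneg fun b _ => by positivity
    have hBle : (B : ℚ) ≤ (p : ℚ) + ((d : ℚ) + 2) := by exact_mod_cast hpB
    have hfacpos : (0 : ℚ) < ((d : ℚ) + 1) * (d.factorial : ℚ) / 2 := by positivity
    have hnn2 : (0 : ℚ) ≤ ((d : ℚ) + 1) * (d.factorial : ℚ) / 2 *
        ((p : ℚ) + ((d : ℚ) + 2) - (B : ℚ)) := by nlinarith
    have hsum0 : (∑ b, (ωb b : ℚ)) = 0 := by linarith
    have hB0 : (p : ℚ) + ((d : ℚ) + 2) - (B : ℚ) = 0 := by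
      have h2 : ((d : ℚ) + 1) * (d.factorial : ℚ) / 2 *
          ((p : ℚ) + ((d : ℚ) + 2) - (B : ℚ)) = 0 := by linarith
      rcases mul_eq_zero.mp h2 with h | h
      · exact absurd h hfacpos.ne'
      · exact h
    refine ⟨fun b => ?_, ?_⟩
    · have hb : (ωb b : ℚ) = 0 :=
        (Finset.sum_eq_zero_iff_of_nonneg
          (fun b _ => by positivity)).mp hsum0 b (Finset.mem_univ b)
      exact_mod_cast hb
    · have h3 : ((p + (d + 2) : ℕ) : ℚ) = (B : ℚ) := by push_cast; linarith
      exact_mod_cast h3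
end

section
/- If D >= 3 and G is a closed (D+1)-colored graph of degree 0 with 2p vertices, then G has at least one face with exactly two vertices. More precisely, the number of faces with exactly 2 vertices satisfies |F_{G,1}| = 2D + Σ_{s≥3}(s-2)|F_{G,s}| + (D(D-3)/2) p ≥ 1. -/
/-- If `D ≥ 3` and `G` is a closed `(D+1)`-colored graph of degree `0` with `2p`
vertices, then the number of faces with exactly two vertices satisfies
`|F_{G,1}| = 2D + Σ_{s≥3} (s-2)|F_{G,s}| + (D(D-3)/2) p ≥ 1`; in particular `G` has a
face with exactly two vertices.  Here `Fs s` is the number of faces with `2s` vertices;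
the total face count is `(D(D-1)/2)p + D` (degree `0`) and double counting vertices on
faces gives `Σ_s s·Fs s = (D(D+1)/2)p`. -/
theorem melonic_two_vertex_face (D p : ℕ) (hD : 3 ≤ D) (hp : 1 ≤ p)
    (Fs : ℕ →₀ ℕ)
    (hFs0 : Fs 0 = 0)
    (htotal : (Fs.sum fun _ n => n) = D * (D - 1) / 2 * p + D)
    (hvert : (Fs.sum fun s n => s * n) = D * (D + 1) / 2 * p) :
    Fs 1 = 2 * D + (Fs.sum fun s n => if 3 ≤ s then (s - 2) * n else 0)
        + D * (D - 3) / 2 * p ∧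
      1 ≤ Fs 1 := by
  obtain ⟨t, rfl⟩ : ∃ t, D = t + 3 := ⟨D - 3, by omega⟩
  obtain ⟨k, hk⟩ : ∃ k, (t + 3) * t = 2 * k := by
    rcases Nat.even_or_odd t with ⟨u, hu⟩ | ⟨u, hu⟩
    · exact ⟨(t + 3) * u, by subst hu; ring⟩
    · exact ⟨(u + 2) * t, by subst hu; ring⟩
  -- compute the three half-products
  have d1 : (t + 3) * (t + 3 - 1) / 2 = k + (t + 3) := by
    have h : (t + 3) * (t + 3 - 1) = 2 * (k + (t + 3)) := by
      have : (t + 3) * (t + 3 - 1) = (t + 3) * t + 2 * (t + 3) := by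
        have h2 : t + 3 - 1 = t + 2 := by omega
        rw [h2]; ring
      rw [this, hk]; ring
    rw [h, Nat.mul_div_cancel_left _ (by norm_num)]
  have d2 : (t + 3) * (t + 3 + 1) / 2 = k + 2 * (t + 3) := by
    have h : (t + 3) * (t + 3 + 1) = 2 * (k + 2 * (t + 3)) := by
      have : (t + 3) * (t + 3 + 1) = (t + 3) * t + 4 * (t + 3) := by ring
      rw [this, hk]; ring
    rw [h, Nat.mul_div_cancel_left _ (by norm_num)]
  have d3 : (t + 3) * (t + 3 - 3) / 2 = k := by
    have h3 : t + 3 - 3 = t := by omega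
    rw [h3, hk, Nat.mul_div_cancel_left _ (by norm_num)]
  rw [d1] at htotal
  rw [d2] at hvert
  rw [d3]
  set C := (Fs.sum fun s n => if 3 ≤ s then (s - 2) * n else 0) with hC
  -- key double-counting identity
  have key : (Fs.sum fun s n => s * n) + Fs 1 = 2 * (Fs.sum fun _ n => n) + C := by
    have h1 : Fs 1 = Fs.sum fun s n => if s = 1 then n else 0 :=
      (Finsupp.sum_ite_self_eq' Fs 1).symm
    rw [h1, hC]
    simp only [Finsupp.sum]
    rw [← Finset.sum_add_distrib, Finset.mul_sum, ← Finset.sum_add_distrib]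
    apply Finset.sum_congr rfl
    intro s hs
    have hne : Fs s ≠ 0 := Finsupp.mem_support_iff.mp hs
    have hs0 : s ≠ 0 := fun h => hne (h ▸ hFs0)
    rcases Nat.lt_or_ge s 3 with h | h
    · interval_cases s <;> simp <;> omega
    · obtain ⟨u, rfl⟩ : ∃ u, s = u + 3 := ⟨s - 3, by omega⟩
      have : u + 3 - 2 = u + 1 := by omega
      simp only [if_pos h, if_neg (by omega : ¬(u + 3 = 1)), this]
      ring
  rw [hvert, htotal] at key
  -- now pure (linear) arithmetic in the atoms k*p, (t+3)*p
  have e : Fs 1 + (k * p + 2 * ((t + 3) * p)) =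
      2 * (k * p) + 2 * ((t + 3) * p) + 2 * (t + 3) + C := by
    calc Fs 1 + (k * p + 2 * ((t + 3) * p))
        = (k + 2 * (t + 3)) * p + Fs 1 := by ring
      _ = 2 * ((k + (t + 3)) * p + (t + 3)) + C := key
      _ = 2 * (k * p) + 2 * ((t + 3) * p) + 2 * (t + 3) + C := by ring
  constructor
  · linarith
  · linarith [Nat.zero_le (k * p), Nat.zero_le C]
end

section
/- For an amplitude of a closed (D+1)-colored graph G in the i.i.d. colored tensor model, A(G) = (λλ̄)^p N^{|F_G| - p D(D-1)/2} = (λλ̄)^p N^{D - (2/(D-1)!) ω(G)}; consequently A(G) ≤ (λλ̄)^p N^D with equality iff ω(G)=0. -/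
/-- The amplitude of a closed connected `(D+1)`-colored graph `G` with `2p` vertices,
`F` faces and degree `ω` in the i.i.d. colored tensor model:
`A(G) = (λλ̄)^p N^{F - pD(D-1)/2} = (λλ̄)^p N^{D - (2/(D-1)!) ω}`; consequently
`A(G) ≤ (λλ̄)^p N^D` with equality iff `ω = 0`. Here `lam = λλ̄ > 0` and `N > 1`. -/
theorem iid_amplitude (D p F ω : ℕ) (hD : 2 ≤ D) (N lam : ℝ)
    (hN : 1 < N) (hlam : 0 < lam)
    (hF : (F : ℝ) = (D : ℝ) * ((D : ℝ) - 1) / 2 * p + D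
        - 2 / ((D - 1).factorial : ℝ) * ω) :
    lam ^ p * N ^ ((F : ℝ) - (p : ℝ) * D * ((D : ℝ) - 1) / 2)
        = lam ^ p * N ^ ((D : ℝ) - 2 / ((D - 1).factorial : ℝ) * ω) ∧
      lam ^ p * N ^ ((F : ℝ) - (p : ℝ) * D * ((D : ℝ) - 1) / 2)
        ≤ lam ^ p * N ^ (D : ℝ) ∧
      (lam ^ p * N ^ ((F : ℝ) - (p : ℝ) * D * ((D : ℝ) - 1) / 2)
        = lam ^ p * N ^ (D : ℝ) ↔ ω = 0) := by
  have hexp : (F : ℝ) - (p : ℝ) * D * ((D : ℝ) - 1) / 2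
      = (D : ℝ) - 2 / ((D - 1).factorial : ℝ) * ω := by
    rw [hF]; ring
  have hfac : (0 : ℝ) < ((D - 1).factorial : ℝ) := by
    exact_mod_cast (D - 1).factorial_pos
  have hpow := pow_pos hlam p
  refine ⟨by rw [hexp], ?_, ?_⟩
  · rw [hexp]
    have : (D : ℝ) - 2 / ((D - 1).factorial : ℝ) * ω ≤ (D : ℝ) := by
      have : 0 ≤ 2 / ((D - 1).factorial : ℝ) * ω := by positivity
      linarith
    exact mul_le_mul_of_nonneg_left (Real.rpow_le_rpow_of_exponent_le hN.le this) hpow.le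
  · rw [hexp]
    constructor
    · intro h
      have h2 := mul_left_cancel₀ hpow.ne' h
      have h3 : (D : ℝ) - 2 / ((D - 1).factorial : ℝ) * ω = (D : ℝ) :=
        le_antisymm ((Real.rpow_le_rpow_left_iff hN).mp h2.le)
          ((Real.rpow_le_rpow_left_iff hN).mp h2.ge)
      have : 2 / ((D - 1).factorial : ℝ) * ω = 0 := by linarith
      have hω : (ω : ℝ) = 0 := by
        rcases mul_eq_zero.mp this with h | h
        · exact absurd h (by positivity)
        · exact h
      exact_mod_cast hω
    · intro h; subst h; norm_num
end

section
/- For n ≥ 1, the complete graph K_{2n+1} admits a 2-factorization, i.e., its edge set can be partitioned into n Hamiltonian cycles (Walecki's theorem). -/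
open SimpleGraph

namespace WaleckiAux

variable {n : ℕ}

/-- adjacency of the `k`-th Walecki cycle on `Option (ZMod (2n))`. -/
def wAdj (n : ℕ) (k : ZMod (2*n)) : Option (ZMod (2*n)) → Option (ZMod (2*n)) → Prop
  | none, none => False
  | none, some b => b = k ∨ b = k + n
  | some a, none => a = k ∨ a = k + n
  | some a, some b => a ≠ b ∧ (a + b = 2*k ∨ a + b = 2*k + 1)

def wG (n : ℕ) (k : ZMod (2*n)) : SimpleGraph (Option (ZMod (2*n))) where
  Adj := wAdj n k
  symm := by
    constructor
    intro x y h
    cases x <;> cases y <;> simp only [wAdj] at h ⊢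
    · exact h
    · exact h
    · obtain ⟨h1, h2⟩ := h
      exact ⟨h1.symm, by rwa [add_comm]⟩
  loopless := by constructor; intro x; cases x <;> simp [wAdj]

lemma wG_adj (k : ZMod (2*n)) (x y : Option (ZMod (2*n))) :
    (wG n k).Adj x y ↔ wAdj n k x y := Iff.rfl

lemma two_n_cast : ((2*n : ℕ) : ZMod (2*n)) = 0 := ZMod.natCast_self _

lemma n_add_n : (n : ZMod (2*n)) + n = 0 := by
  have := two_n_cast (n := n); push_cast at this; linear_combination this

lemma n_ne_zero (hn : 1 ≤ n) : (n : ZMod (2*n)) ≠ 0 := by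
  intro h
  rw [ZMod.natCast_eq_zero_iff] at h
  exact absurd (Nat.le_of_dvd (by omega) h) (by omega)

lemma cast_val_eq (hn : 1 ≤ n) (x : ZMod (2*n)) : ((x.val : ℕ) : ZMod (2*n)) = x := by
  haveI : NeZero (2*n) := ⟨by omega⟩
  exact ZMod.natCast_rightInverse x

lemma val_lt' (hn : 1 ≤ n) (x : ZMod (2*n)) : x.val < 2*n := by
  haveI : NeZero (2*n) := ⟨by omega⟩
  exact ZMod.val_lt x

lemma cast_inj_of_lt (hn : 1 ≤ n) {a b : ℕ} (ha : a < 2*n) (hb : b < 2*n)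
    (h : (a : ZMod (2*n)) = (b : ZMod (2*n))) : a = b := by
  haveI : NeZero (2*n) := ⟨by omega⟩
  have := congrArg ZMod.val h
  rwa [ZMod.val_cast_of_lt ha, ZMod.val_cast_of_lt hb] at this

lemma two_mul_eq_zero_iff (hn : 1 ≤ n) (x : ZMod (2*n)) :
    2*x = 0 ↔ x = 0 ∨ x = (n : ℕ) := by
  haveI : NeZero (2*n) := ⟨by omega⟩
  constructor
  · intro h
    have hx : ((x.val : ℕ) : ZMod (2*n)) = x := cast_val_eq hn x
    have h2 : ((2 * x.val : ℕ) : ZMod (2*n)) = 0 := by push_cast; rw [hx]; exact h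
    rw [ZMod.natCast_eq_zero_iff] at h2
    obtain ⟨c, hc⟩ := h2
    have hlt : x.val < 2*n := ZMod.val_lt x
    have : x.val = 0 ∨ x.val = n := by
      rcases Nat.lt_or_ge c 2 with hc2 | hc2
      · interval_cases c <;> omega
      · nlinarith
    rcases this with h0 | h0
    · left; rw [← hx, h0]; simp
    · right; rw [← hx, h0]
  · rintro (rfl | rfl)
    · ring
    · have := two_n_cast (n := n); push_cast at this ⊢; linear_combination this

lemma two_mul_ne_one (hn : 1 ≤ n) (x : ZMod (2*n)) : 2*x ≠ 1 := by
  intro h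
  apply n_ne_zero hn
  have h2 : (2 : ZMod (2*n)) * (n : ℕ) = 0 := by
    have := two_n_cast (n := n); push_cast at this ⊢; linear_combination this
  calc (n : ZMod (2*n)) = (2*x) * n := by rw [h, one_mul]
    _ = x * (2 * n) := by ring
    _ = 0 := by rw [h2, mul_zero]

lemma wG_card_neighbor (hn : 1 ≤ n) (k : ZMod (2*n)) (v : Option (ZMod (2*n))) :
    Nat.card ((wG n k).neighborSet v) = 2 := by
  haveI : NeZero (2*n) := ⟨by omega⟩
  haveI : Fact (1 < 2*n) := ⟨by omega⟩
  have hone : (1 : ZMod (2*n)) ≠ 0 := one_ne_zero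
  cases v with
  | none =>
    have hset : (wG n k).neighborSet none = {some k, some (k + n)} := by
      ext x
      cases x with
      | none => simp [neighborSet, wG_adj, wAdj]
      | some b => simp [neighborSet, wG_adj, wAdj]
    rw [hset, Nat.card_coe_set_eq, Set.ncard_pair]
    simp only [ne_eq, Option.some.injEq]
    intro h
    exact n_ne_zero hn (by linear_combination -h)
  | some a =>
    by_cases ha : a = k ∨ a = k + n
    · have hset : (wG n k).neighborSet (some a) = {none, some (2*k + 1 - a)} := by
        ext x
        cases x with
        | none => simpa [neighborSet, wG_adj, wAdj] using ha
        | some b =>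
          simp only [neighborSet, Set.mem_setOf_eq, wG_adj, wAdj, Set.mem_insert_iff,
            Set.mem_singleton_iff, Option.some.injEq, reduceCtorEq, false_or]
          constructor
          · rintro ⟨hab, h2k | h2k⟩
            · exfalso
              rcases ha with rfl | rfl
              · exact hab (by linear_combination -h2k)
              · apply hab
                have := n_add_n (n := n)
                linear_combination -h2k + this
            · linear_combination h2k
          · rintro rfl
            refine ⟨?_, Or.inr (by ring)⟩
            intro hab
            exact two_mul_ne_one hn (a - k) (by linear_combination hab)
      rw [hset, Nat.card_coe_set_eq, Set.ncard_pair]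
      simp
    · push_neg at ha
      have hset : (wG n k).neighborSet (some a) = {some (2*k - a), some (2*k + 1 - a)} := by
        ext x
        cases x with
        | none => simpa [neighborSet, wG_adj, wAdj] using ha
        | some b =>
          simp only [neighborSet, Set.mem_setOf_eq, wG_adj, wAdj, Set.mem_insert_iff,
            Set.mem_singleton_iff, Option.some.injEq]
          constructor
          · rintro ⟨hab, h2k | h2k⟩
            · exact Or.inl (by linear_combination h2k)
            · exact Or.inr (by linear_combination h2k)
          · rintro (rfl | rfl)
            · refine ⟨?_, Or.inl (by ring)⟩
              intro hab
              have h0 : 2*(a - k) = 0 := by linear_combination hab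
              rcases (two_mul_eq_zero_iff hn _).mp h0 with h1 | h1
              · exact ha.1 (by linear_combination h1)
              · exact ha.2 (by linear_combination h1)
            · refine ⟨?_, Or.inr (by ring)⟩
              intro hab
              exact two_mul_ne_one hn (a - k) (by linear_combination hab)
      rw [hset, Nat.card_coe_set_eq, Set.ncard_pair]
      simp only [ne_eq, Option.some.injEq]
      intro h
      exact hone (by linear_combination -h)

lemma wG_reach_aux (hn : 1 ≤ n) (k : ZMod (2*n)) (m : ℕ) :
    (wG n k).Reachable (some (k + m)) none := by
  induction m with
  | zero =>
    exact (SimpleGraph.Adj.reachable (by simp [wG_adj, wAdj]))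
  | succ m ih =>
    set a : ZMod (2*n) := k + (m+1 : ℕ) with ha
    have hcast : a = k + (m : ZMod (2*n)) + 1 := by rw [ha]; push_cast; ring
    by_cases h1 : a = k ∨ a = k + n
    · exact SimpleGraph.Adj.reachable (by simpa [wG_adj, wAdj] using h1)
    push_neg at h1
    by_cases h3 : a = k + 1
    · have e1 : (wG n k).Adj (some a) (some k) := by
        refine ⟨?_, Or.inr (by rw [h3]; ring)⟩
        intro h; exact h1.1 h
      have e2 : (wG n k).Adj (some k) none := Or.inl rfl
      exact e1.reachable.trans e2.reachable
    by_cases h4 : a = k + 1 + n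
    · have e1 : (wG n k).Adj (some a) (some (k + n)) := by
        refine ⟨?_, Or.inr ?_⟩
        · intro h
          have h' : a = k + (n : ℕ) := h
          rw [h4] at h'
          have hone : (1 : ZMod (2*n)) ≠ 0 := by
            haveI : Fact (1 < 2*n) := ⟨by omega⟩; exact one_ne_zero
          exact hone (by linear_combination h')
        · rw [h4]
          have h0 := n_add_n (n := n)
          linear_combination h0
      have e2 : (wG n k).Adj (some (k + n)) none := Or.inr rfl
      exact e1.reachable.trans e2.reachable
    · have e1 : (wG n k).Adj (some a) (some (2*k + 1 - a)) := by
        refine ⟨?_, Or.inr (by ring)⟩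
        intro h
        exact two_mul_ne_one hn (a - k) (by linear_combination h)
      have e2 : (wG n k).Adj (some (2*k + 1 - a)) (some (k + m)) := by
        have hm : (k + (m : ℕ) : ZMod (2*n)) = a - 1 := by rw [hcast]; ring
        rw [hm]
        refine ⟨?_, Or.inl (by ring)⟩
        intro h
        have h0 : 2*(a - (k+1)) = 0 := by linear_combination -h
        rcases (two_mul_eq_zero_iff hn _).mp h0 with hc | hc
        · exact h3 (by linear_combination hc)
        · exact h4 (by linear_combination hc)
      exact (e1.reachable.trans e2.reachable).trans ih

lemma wG_connected (hn : 1 ≤ n) (k : ZMod (2*n)) : (wG n k).Connected := by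
  haveI : NeZero (2*n) := ⟨by omega⟩
  rw [SimpleGraph.connected_iff]
  refine ⟨?_, ⟨none⟩⟩
  have key : ∀ v, (wG n k).Reachable v none := by
    intro v
    cases v with
    | none => exact SimpleGraph.Reachable.refl _
    | some a =>
      have : a = k + ((a - k).val : ℕ) := by rw [cast_val_eq hn]; ring
      rw [this]
      exact wG_reach_aux hn k _
  intro u v
  exact (key u).trans (key v).symm

lemma wG_disjoint (hn : 1 ≤ n) (i j : Fin n) (x y : Option (ZMod (2*n)))
    (hi : (wG n ((i : ℕ) : ZMod (2*n))).Adj x y)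
    (hj : (wG n ((j : ℕ) : ZMod (2*n))).Adj x y) : i = j := by
  haveI : NeZero (2*n) := ⟨by omega⟩
  have hcast : ∀ a b : ℕ, a < 2*n → b < 2*n → (a : ZMod (2*n)) = (b : ZMod (2*n)) → a = b :=
    fun a b ha hb h => cast_inj_of_lt hn ha hb h
  have hii : (i : ℕ) < n := i.2
  have hjj : (j : ℕ) < n := j.2
  have main : ∀ b : ZMod (2*n),
      (b = ((i:ℕ) : ZMod (2*n)) ∨ b = ((i:ℕ) : ZMod (2*n)) + n) →
      (b = ((j:ℕ) : ZMod (2*n)) ∨ b = ((j:ℕ) : ZMod (2*n)) + n) → i = j := by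
    rintro b (rfl | rfl) (hb | hb)
    · exact Fin.ext (hcast _ _ (by omega) (by omega) hb)
    · have : ((i:ℕ) : ZMod (2*n)) = (((j:ℕ) + n : ℕ) : ZMod (2*n)) := by push_cast; exact hb
      have := hcast _ _ (by omega) (by omega) this
      omega
    · have : (((i:ℕ) + n : ℕ) : ZMod (2*n)) = ((j:ℕ) : ZMod (2*n)) := by push_cast; exact hb
      have := hcast _ _ (by omega) (by omega) this
      omega
    · have : (((i:ℕ) + n : ℕ) : ZMod (2*n)) = (((j:ℕ) + n : ℕ) : ZMod (2*n)) := by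
        push_cast; exact hb
      have := hcast _ _ (by omega) (by omega) this
      exact Fin.ext (by omega)
  cases x with
  | none =>
    cases y with
    | none => exact absurd hi (by simp [wG_adj, wAdj])
    | some b => exact main b hi hj
  | some a =>
    cases y with
    | none => exact main a hi hj
    | some b =>
      obtain ⟨-, hi2⟩ := hi
      obtain ⟨-, hj2⟩ := hj
      have conv : ∀ (s : ZMod (2*n)) (c : Fin n),
          (s = 2*((c:ℕ) : ZMod (2*n)) ∨ s = 2*((c:ℕ) : ZMod (2*n)) + 1) →
          s.val = 2*(c:ℕ) ∨ s.val = 2*(c:ℕ) + 1 := by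
        rintro s c (rfl | rfl)
        · left
          have : (2*((c:ℕ) : ZMod (2*n))) = ((2*(c:ℕ) : ℕ) : ZMod (2*n)) := by push_cast; ring
          rw [this, ZMod.val_cast_of_lt (by omega)]
        · right
          have : (2*((c:ℕ) : ZMod (2*n)) + 1) = ((2*(c:ℕ) + 1 : ℕ) : ZMod (2*n)) := by
            push_cast; ring
          rw [this, ZMod.val_cast_of_lt (by omega)]
      have h1 := conv (a+b) i (by tauto)
      have h2 := conv (a+b) j (by tauto)
      exact Fin.ext (by omega)

lemma wG_union (hn : 1 ≤ n) (x y : Option (ZMod (2*n))) (hxy : x ≠ y) :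
    ∃ i : Fin n, (wG n ((i : ℕ) : ZMod (2*n))).Adj x y := by
  haveI : NeZero (2*n) := ⟨by omega⟩
  have main : ∀ b : ZMod (2*n), ∃ i : Fin n,
      b = ((i:ℕ) : ZMod (2*n)) ∨ b = ((i:ℕ) : ZMod (2*n)) + n := by
    intro b
    have hb := val_lt' hn b
    rcases Nat.lt_or_ge b.val n with h | h
    · exact ⟨⟨b.val, h⟩, Or.inl (cast_val_eq hn b).symm⟩
    · refine ⟨⟨b.val - n, by omega⟩, Or.inr ?_⟩
      have : ((b.val - n : ℕ) : ZMod (2*n)) + (n : ℕ) = ((b.val : ℕ) : ZMod (2*n)) := by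
        rw [← Nat.cast_add]
        congr 1
        omega
      rw [this, cast_val_eq hn]
  cases x with
  | none =>
    cases y with
    | none => exact absurd rfl hxy
    | some b =>
      obtain ⟨i, hi⟩ := main b
      exact ⟨i, hi⟩
  | some a =>
    cases y with
    | none =>
      obtain ⟨i, hi⟩ := main a
      exact ⟨i, hi⟩
    | some b =>
      have hab : a ≠ b := fun h => hxy (by rw [h])
      have hv := val_lt' hn (a + b)
      have hsv : (((a+b).val : ℕ) : ZMod (2*n)) = a + b := cast_val_eq hn (a+b)
      rcases Nat.even_or_odd (a+b).val with ⟨c, hc⟩ | ⟨c, hc⟩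
      · refine ⟨⟨c, by omega⟩, hab, Or.inl ?_⟩
        calc a + b = (((a+b).val : ℕ) : ZMod (2*n)) := hsv.symm
          _ = 2*((c : ℕ) : ZMod (2*n)) := by rw [hc]; push_cast; ring
      · refine ⟨⟨c, by omega⟩, hab, Or.inr ?_⟩
        calc a + b = (((a+b).val : ℕ) : ZMod (2*n)) := hsv.symm
          _ = 2*((c : ℕ) : ZMod (2*n)) + 1 := by rw [hc]; push_cast; ring

lemma edgeSet_map_equiv {V W : Type*} (e : V ≃ W) (G : SimpleGraph V) :
    (G.map e.toEmbedding).edgeSet = Sym2.map e '' G.edgeSet := by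
  ext s
  refine Sym2.ind (fun x y => ?_) s
  simp only [SimpleGraph.mem_edgeSet, SimpleGraph.map_adj, Set.mem_image]
  constructor
  · rintro ⟨a, b, hab, rfl, rfl⟩
    exact ⟨s(a, b), hab, rfl⟩
  · rintro ⟨t, ht, hts⟩
    refine Sym2.ind (fun a b (ht : G.Adj a b) hts => ?_) t ht hts
    rw [Sym2.map_pair_eq, Sym2.eq_iff] at hts
    rcases hts with ⟨rfl, rfl⟩ | ⟨rfl, rfl⟩
    · exact ⟨a, b, ht, rfl, rfl⟩
    · exact ⟨b, a, ht.symm, rfl, rfl⟩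

end WaleckiAux

open WaleckiAux in
/-- Walecki's theorem: for `n ≥ 1`, the edge set of the complete graph `K_{2n+1}` can be
partitioned into `n` Hamiltonian cycles, i.e. `n` spanning subgraphs which are 2-regular
and connected, with pairwise disjoint edge sets exhausting all edges. -/
theorem walecki_odd (n : ℕ) (hn : 1 ≤ n) :
    ∃ H : Fin n → SimpleGraph (Fin (2 * n + 1)),
      (Pairwise fun i j => Disjoint (H i).edgeSet (H j).edgeSet) ∧
      (⋃ i, (H i).edgeSet) = (⊤ : SimpleGraph (Fin (2 * n + 1))).edgeSet ∧
      (∀ i, (∀ v, Nat.card ((H i).neighborSet v) = 2) ∧ (H i).Connected) := by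
  haveI : NeZero (2 * n) := ⟨by omega⟩
  classical
  let E : Option (ZMod (2 * n)) ≃ Fin (2 * n + 1) :=
    (Equiv.optionCongr (Fintype.equivFinOfCardEq (ZMod.card (2 * n)))).trans
      (finSuccEquiv (2 * n)).symm
  let G : Fin n → SimpleGraph (Option (ZMod (2 * n))) :=
    fun i => wG n ((i : ℕ) : ZMod (2 * n))
  refine ⟨fun i => (G i).map E.toEmbedding, ?_, ?_, ?_⟩
  · intro i j hij
    rw [Set.disjoint_left]
    intro s hsi hsj
    rw [edgeSet_map_equiv] at hsi hsj
    obtain ⟨t, ht, rfl⟩ := hsi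
    obtain ⟨t', ht', htt⟩ := hsj
    have : t' = t := Sym2.map.injective E.injective htt
    subst this
    revert ht ht'
    refine Sym2.ind (fun x y hx hy => ?_) t'
    rw [SimpleGraph.mem_edgeSet] at hx hy
    exact hij (wG_disjoint hn i j x y hy hx)
  · apply Set.eq_of_subset_of_subset
    · rw [Set.iUnion_subset_iff]
      intro i
      exact SimpleGraph.edgeSet_mono le_top
    · intro s hs
      revert hs
      refine Sym2.ind (fun x y hs => ?_) s
      rw [SimpleGraph.mem_edgeSet, SimpleGraph.top_adj] at hs
      have hne : E.symm x ≠ E.symm y := fun h => hs (by simpa using congrArg E h)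
      obtain ⟨i, hi⟩ := wG_union hn (E.symm x) (E.symm y) hne
      rw [Set.mem_iUnion]
      refine ⟨i, ?_⟩
      rw [edgeSet_map_equiv]
      exact ⟨s(E.symm x, E.symm y), (SimpleGraph.mem_edgeSet _).mpr hi,
        by rw [Sym2.map_pair_eq]; simp⟩
  · intro i
    let iso : G i ≃g (G i).map E.toEmbedding := SimpleGraph.Iso.map E (G i)
    constructor
    · intro v
      have hv : v = iso (E.symm v) := by
        rw [show iso (E.symm v) = E (E.symm v) from rfl, E.apply_symm_apply]
      rw [hv, ← Nat.card_congr (iso.mapNeighborSet (E.symm v))]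
      exact wG_card_neighbor hn _ _
    · exact iso.connected_iff.mp (wG_connected hn _)
end

section
/- For n ≥ 1, the complete graph K_{2n+2} admits a decomposition of its edge set into n Hamiltonian cycles plus one perfect matching (1-factor). -/
namespace WaleckiAux

variable (n : ℕ)

abbrev Z := ZMod (2*n+1)
abbrev W := Option (Z n)

/-- building-block graph: finite x ~ y iff x+y = s, ∞ ~ x iff 2x = s. -/
def adjF (s : Z n) : W n → W n → Prop
  | some x, some y => x ≠ y ∧ x + y = s
  | some x, none => 2*x = s
  | none, some y => 2*y = s
  | none, none => False

def G (s : Z n) : SimpleGraph (W n) where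
  Adj := adjF n s
  symm := by
    constructor
    rintro (x|x) (y|y) h <;> simp [adjF] at * <;>
      [skip; skip; skip] <;> try tauto
    exact ⟨fun e => h.1 e.symm, by rw [add_comm]; exact h.2⟩
  loopless := by constructor; rintro (x|x) h <;> simp [adjF] at h

lemma g_adj_some_some {s x y : Z n} : (G n s).Adj (some x) (some y) ↔ x ≠ y ∧ x + y = s := Iff.rfl
lemma g_adj_some_none {s x : Z n} : (G n s).Adj (some x) none ↔ 2*x = s := Iff.rfl
lemma g_adj_none_some {s y : Z n} : (G n s).Adj none (some y) ↔ 2*y = s := Iff.rfl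

/-- uniqueness of the class of an edge -/
lemma adj_unique {s t : Z n} {a b : W n} (hs : (G n s).Adj a b) (ht : (G n t).Adj a b) : s = t := by
  match a, b with
  | some x, some y => exact hs.2 ▸ ht.2 ▸ rfl
  | some x, none => exact hs ▸ ht ▸ rfl
  | none, some y => exact hs ▸ ht ▸ rfl
  | none, none => exact absurd hs id

lemma adj_exists {a b : W n} (hab : a ≠ b) : ∃ s, (G n s).Adj a b := by
  match a, b with
  | some x, some y => exact ⟨x + y, fun e => hab (by rw [e]), rfl⟩
  | some x, none => exact ⟨2*x, rfl⟩
  | none, some y => exact ⟨2*y, rfl⟩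
  | none, none => exact absurd rfl hab

lemma edge_disjoint {s t : Z n} (hst : s ≠ t) : Disjoint (G n s).edgeSet (G n t).edgeSet := by
  rw [Set.disjoint_left]
  intro e hs ht
  induction e with
  | h a b => exact hst (adj_unique n hs ht)

/-- two times n+1 is one -/
lemma two_inv : (2 : Z n) * ((n+1 : ℕ) : Z n) = 1 := by
  have h : ((2*n+1 : ℕ) : Z n) = 0 := ZMod.natCast_self _
  push_cast at h ⊢
  linear_combination h

/-- solving 2x = s -/
lemma two_eq_iff {s x : Z n} : 2*x = s ↔ x = ((n+1:ℕ) : Z n) * s := by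
  constructor
  · intro h
    rw [← h, ← mul_assoc, mul_comm (((n+1:ℕ)) : Z n) 2, two_inv, one_mul]
  · intro h
    rw [h, ← mul_assoc, two_inv, one_mul]

def nbr (s : Z n) : W n → W n
  | some x => if 2*x = s then none else some (s - x)
  | none => some (((n+1:ℕ) : Z n) * s)

lemma neighborSet_eq (s : Z n) (v : W n) : (G n s).neighborSet v = {nbr n s v} := by
  ext w
  simp only [SimpleGraph.mem_neighborSet, Set.mem_singleton_iff]
  match v, w with
  | some x, some y =>
    rw [g_adj_some_some, nbr]
    constructor
    · rintro ⟨hxy, hsum⟩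
      have h2 : 2*x ≠ s := fun h => hxy (by linear_combination h - hsum)
      rw [if_neg h2]
      congr 1
      linear_combination hsum
    · intro h
      by_cases h2 : 2*x = s
      · rw [if_pos h2] at h; exact absurd h (by simp)
      · rw [if_neg h2] at h
        injection h with h'
        obtain rfl := h'
        exact ⟨fun e => h2 (by linear_combination e), by ring⟩
  | some x, none =>
    rw [g_adj_some_none, nbr]
    constructor
    · intro h; rw [if_pos h]
    · intro h
      by_cases h2 : 2*x = s
      · exact h2
      · rw [if_neg h2] at h; exact absurd h (by simp)
  | none, some y =>
    rw [g_adj_none_some, nbr, two_eq_iff]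
    simp
  | none, none =>
    exact iff_of_false id (by simp [nbr])


lemma nbr_ne {s t : Z n} (hst : s ≠ t) (v : W n) : nbr n s v ≠ nbr n t v := by
  match v with
  | none =>
    simp only [nbr, ne_eq, Option.some.injEq]
    intro h
    apply hst
    have h2 : (2:Z n) * (((n+1:ℕ):Z n) * s) = 2 * (((n+1:ℕ):Z n) * t) :=
      congrArg (fun z => (2 : Z n) * z) h
    rwa [← mul_assoc, two_inv, one_mul, ← mul_assoc, two_inv, one_mul] at h2
  | some x =>
    simp only [nbr]
    by_cases hp : 2*x = s <;> by_cases hq : 2*x = t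
    · exact absurd (hp.symm.trans hq) hst
    · simp [if_pos hp, if_neg hq]
    · simp [if_neg hp, if_pos hq]
    · simp only [if_neg hp, if_neg hq, ne_eq, Option.some.injEq]
      intro h
      exact hst (by linear_combination h)

lemma natCast_inj {a b : ℕ} (ha : a < 2*n+1) (hb : b < 2*n+1)
    (h : ((a : ℕ) : Z n) = ((b : ℕ) : Z n)) : a = b := by
  have := congrArg ZMod.val h
  rwa [ZMod.val_natCast_of_lt ha, ZMod.val_natCast_of_lt hb] at this

lemma natCast_ne_zero {j : ℕ} (h1 : 1 ≤ j) (h2 : j ≤ 2*n) : ((j : ℕ) : Z n) ≠ 0 := by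
  intro h
  have := natCast_inj n (by omega) (by omega) (h.trans (Nat.cast_zero).symm)
  omega

/-- the Hamiltonian cycles, on `W n` -/
def HW (i : Fin n) : SimpleGraph (W n) := G n ((2*(i:ℕ) : ℕ) : Z n) ⊔ G n ((2*(i:ℕ)+1 : ℕ) : Z n)

/-- the perfect matching, on `W n` -/
def MW : SimpleGraph (W n) := G n ((2*n : ℕ) : Z n)

lemma st_ne (i : Fin n) : ((2*(i:ℕ) : ℕ) : Z n) ≠ ((2*(i:ℕ)+1 : ℕ) : Z n) := by
  intro h
  have hi := i.isLt
  have := natCast_inj n (by omega) (by omega) h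
  omega

lemma card_neighborSet_sup {s t : Z n} (hst : s ≠ t) (v : W n) :
    Nat.card ((G n s ⊔ G n t).neighborSet v) = 2 := by
  have hset : (G n s ⊔ G n t).neighborSet v = {nbr n s v, nbr n t v} := by
    ext w
    simp only [SimpleGraph.mem_neighborSet, SimpleGraph.sup_adj, Set.mem_insert_iff,
      Set.mem_singleton_iff]
    rw [← Set.mem_singleton_iff (a := w), ← Set.mem_singleton_iff (a := w) (b := nbr n t v),
      ← neighborSet_eq, ← neighborSet_eq]
    rfl
  rw [hset, Nat.card_coe_set_eq, Set.ncard_pair (nbr_ne n hst v)]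

lemma card_neighborSet_single (s : Z n) (v : W n) :
    Nat.card ((G n s).neighborSet v) = 1 := by
  rw [neighborSet_eq, Nat.card_coe_set_eq, Set.ncard_singleton]


lemma adj_none_c (i : Fin n) : (HW n i).Adj none (some (((i:ℕ):Z n))) := by
  rw [HW, SimpleGraph.sup_adj]
  left
  rw [g_adj_none_some]
  push_cast
  ring

lemma reach_aux (i : Fin n) : ∀ k : ℕ, k ≤ n →
    (HW n i).Reachable none (some (((i:ℕ):Z n) + ((k:ℕ):Z n))) ∧
    (HW n i).Reachable none (some (((i:ℕ):Z n) - ((k:ℕ):Z n))) := by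
  intro k
  induction k with
  | zero =>
    intro _
    have h0 := (adj_none_c n i).reachable
    constructor <;> simpa using h0
  | succ k ih =>
    intro hk
    obtain ⟨h1, h2⟩ := ih (by omega)
    have e3 : (HW n i).Adj (some (((i:ℕ):Z n) - ((k:ℕ):Z n)))
        (some (((i:ℕ):Z n) + (((k+1:ℕ)):Z n))) := by
      rw [HW, SimpleGraph.sup_adj]
      right
      rw [g_adj_some_some]
      constructor
      · intro h
        apply natCast_ne_zero n (j := 2*k+1) (by omega) (by omega)
        push_cast at h ⊢
        linear_combination - h
      · push_cast
        ring
    have h3 := h2.trans e3.reachable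
    have e2 : (HW n i).Adj (some (((i:ℕ):Z n) + (((k+1:ℕ)):Z n)))
        (some (((i:ℕ):Z n) - (((k+1:ℕ)):Z n))) := by
      rw [HW, SimpleGraph.sup_adj]
      left
      rw [g_adj_some_some]
      constructor
      · intro h
        apply natCast_ne_zero n (j := 2*(k+1)) (by omega) (by omega)
        push_cast at h ⊢
        linear_combination h
      · push_cast
        ring
    exact ⟨h3, h3.trans e2.reachable⟩

lemma reach_all (i : Fin n) (a : W n) : (HW n i).Reachable none a := by
  match a with
  | none => exact SimpleGraph.Reachable.refl _
  | some x =>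
    have hxc : (((x - ((i:ℕ):Z n)).val : ℕ) : Z n) = x - ((i:ℕ):Z n) :=
      ZMod.natCast_zmod_val _
    set j := (x - ((i:ℕ):Z n)).val with hj
    have hjlt : j < 2*n+1 := ZMod.val_lt _
    by_cases hle : j ≤ n
    · have hr := (reach_aux n i j hle).1
      have : ((i:ℕ):Z n) + ((j:ℕ):Z n) = x := by linear_combination hxc
      rwa [this] at hr
    · have hr := (reach_aux n i (2*n+1-j) (by omega)).2
      have hm : ((2*n+1 : ℕ) : Z n) = 0 := ZMod.natCast_self _
      have : ((i:ℕ):Z n) - (((2*n+1-j : ℕ)):Z n) = x := by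
        rw [Nat.cast_sub (by omega : j ≤ 2*n+1)]
        linear_combination hxc - hm
      rwa [this] at hr

lemma hw_connected (i : Fin n) : (HW n i).Connected := by
  rw [SimpleGraph.connected_iff]
  exact ⟨fun a b => (reach_all n i a).symm.trans (reach_all n i b), ⟨none⟩⟩


lemma cast_ne_of_ne {a b : ℕ} (ha : a < 2*n+1) (hb : b < 2*n+1) (h : a ≠ b) :
    ((a:ℕ) : Z n) ≠ ((b:ℕ) : Z n) := fun e => h (natCast_inj n ha hb e)

lemma hw_pairwise_disjoint :
    Pairwise fun i j : Fin n => Disjoint (HW n i).edgeSet (HW n j).edgeSet := by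
  intro i j hij
  have hi := i.isLt
  have hj := j.isLt
  have hij' : (i:ℕ) ≠ (j:ℕ) := fun e => hij (Fin.ext e)
  rw [HW, HW, SimpleGraph.edgeSet_sup, SimpleGraph.edgeSet_sup, Set.disjoint_union_left]
  constructor <;> rw [Set.disjoint_union_right] <;>
    exact ⟨edge_disjoint n (cast_ne_of_ne n (by omega) (by omega) (by omega)),
      edge_disjoint n (cast_ne_of_ne n (by omega) (by omega) (by omega))⟩

lemma hw_m_disjoint (i : Fin n) : Disjoint (HW n i).edgeSet (MW n).edgeSet := by
  have hi := i.isLt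
  rw [HW, MW, SimpleGraph.edgeSet_sup, Set.disjoint_union_left]
  exact ⟨edge_disjoint n (cast_ne_of_ne n (by omega) (by omega) (by omega)),
    edge_disjoint n (cast_ne_of_ne n (by omega) (by omega) (by omega))⟩

lemma hw_m_union (hn : 1 ≤ n) :
    (⋃ i, (HW n i).edgeSet) ∪ (MW n).edgeSet = (⊤ : SimpleGraph (W n)).edgeSet := by
  apply Set.Subset.antisymm
  · apply Set.union_subset
    · exact Set.iUnion_subset fun i => SimpleGraph.edgeSet_mono le_top
    · exact SimpleGraph.edgeSet_mono le_top
  · intro e he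
    induction e with
    | h a b =>
      rw [SimpleGraph.mem_edgeSet, SimpleGraph.top_adj] at he
      obtain ⟨s, hs⟩ := adj_exists n he
      have hk : s.val < 2*n+1 := ZMod.val_lt _
      have hcast : ((s.val : ℕ) : Z n) = s := ZMod.natCast_zmod_val _
      by_cases hke : s.val = 2*n
      · right
        have h2 : ((2*n : ℕ) : Z n) = s := by rw [← hcast, hke]
        rw [MW, SimpleGraph.mem_edgeSet, h2]
        exact hs
      · left
        rw [Set.mem_iUnion]
        refine ⟨⟨s.val/2, by omega⟩, ?_⟩
        rw [HW, SimpleGraph.edgeSet_sup]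
        rcases (by omega : s.val = 2*(s.val/2) ∨ s.val = 2*(s.val/2)+1) with hpar | hpar
        · left
          rw [SimpleGraph.mem_edgeSet]
          show (G n ((2*(s.val/2) :ℕ) : Z n)).Adj a b
          rw [show (2*(s.val/2) :ℕ) = s.val from by omega, hcast]
          exact hs
        · right
          rw [SimpleGraph.mem_edgeSet]
          show (G n ((2*(s.val/2)+1 :ℕ) : Z n)).Adj a b
          rw [show (2*(s.val/2)+1 :ℕ) = s.val from by omega, hcast]
          exact hs

section transport

variable {V : Type*} {V' : Type*}

lemma comap_edge_disjoint (f : V → V') {A B : SimpleGraph V'}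
    (h : Disjoint A.edgeSet B.edgeSet) :
    Disjoint (A.comap f).edgeSet ((B.comap f)).edgeSet := by
  rw [Set.disjoint_left] at h ⊢
  intro e ha hb
  induction e with
  | h a b =>
    exact h ((SimpleGraph.mem_edgeSet A).mpr (SimpleGraph.comap_adj.mp ha))
      ((SimpleGraph.mem_edgeSet B).mpr (SimpleGraph.comap_adj.mp hb))

lemma comap_edgeSet (f : V → V') (A : SimpleGraph V') :
    (A.comap f).edgeSet = Sym2.map f ⁻¹' A.edgeSet := by
  ext e
  induction e with
  | h a b => simp [SimpleGraph.mem_edgeSet, SimpleGraph.comap_adj]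

lemma comap_card_neighborSet (f : V ≃ V') (A : SimpleGraph V') (v : V) :
    Nat.card ((A.comap (f : V → V')).neighborSet v) = Nat.card (A.neighborSet (f v)) := by
  have hset : (A.comap (f : V → V')).neighborSet v = f ⁻¹' A.neighborSet (f v) := rfl
  have him : (f : V → V') ⁻¹' A.neighborSet (f v) = f.symm '' A.neighborSet (f v) := by
    rw [Equiv.image_eq_preimage_symm]
    rfl
  rw [hset, him, Nat.card_coe_set_eq, Nat.card_coe_set_eq,
    Set.ncard_image_of_injective _ f.symm.injective]

def comapIso (f : V ≃ V') (A : SimpleGraph V') : (A.comap (f : V → V')) ≃g A := ⟨f, Iff.rfl⟩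

lemma comap_connected (f : V ≃ V') {A : SimpleGraph V'} (h : A.Connected) :
    (A.comap (f : V → V')).Connected :=
  ((comapIso f A).connected_iff).mpr h

lemma comap_top (f : V ≃ V') : ((⊤ : SimpleGraph V').comap (f : V → V')) = ⊤ := by
  ext a b
  simp [SimpleGraph.comap_adj, f.injective.ne_iff]

end transport

/-- the equivalence -/
def toW : Fin (2*n+2) ≃ W n := finSuccEquivLast

end WaleckiAux

open WaleckiAux in
/-- For `n ≥ 1`, the edge set of the complete graph `K_{2n+2}` decomposes into `n`
Hamiltonian cycles (connected 2-regular spanning subgraphs) plus one perfect matching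
(a 1-regular spanning subgraph), all with pairwise disjoint edge sets exhausting all
edges. -/
theorem walecki_even (n : ℕ) (hn : 1 ≤ n) :
    ∃ (H : Fin n → SimpleGraph (Fin (2 * n + 2)))
      (M : SimpleGraph (Fin (2 * n + 2))),
      (Pairwise fun i j => Disjoint (H i).edgeSet (H j).edgeSet) ∧
      (∀ i, Disjoint (H i).edgeSet M.edgeSet) ∧
      ((⋃ i, (H i).edgeSet) ∪ M.edgeSet
        = (⊤ : SimpleGraph (Fin (2 * n + 2))).edgeSet) ∧
      (∀ i, (∀ v, Nat.card ((H i).neighborSet v) = 2) ∧ (H i).Connected) ∧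
      (∀ v, Nat.card (M.neighborSet v) = 1) := by
  refine ⟨fun i => (HW n i).comap (toW n : _ → W n),
    (MW n).comap (toW n : _ → W n), ?_, ?_, ?_, ?_, ?_⟩
  · exact fun i j hij => comap_edge_disjoint _ (hw_pairwise_disjoint n hij)
  · exact fun i => comap_edge_disjoint _ (hw_m_disjoint n i)
  · rw [show (⊤ : SimpleGraph (Fin (2*n+2))) = ((⊤ : SimpleGraph (W n)).comap (toW n : _ → W n))
      from (comap_top (toW n)).symm]
    simp only [comap_edgeSet]
    rw [← Set.preimage_iUnion, ← Set.preimage_union, hw_m_union n hn]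
  · intro i
    constructor
    · intro v
      rw [comap_card_neighborSet]
      exact card_neighborSet_sup n (st_ne n i) _
    · exact comap_connected _ (hw_connected n i)
  · intro v
    rw [comap_card_neighborSet]
    exact card_neighborSet_single n _ _
end

section
/- The degree of a closed (D+1)-colored graph is always a multiple of (D-1)!/2; more precisely ω(G) = ((D-1)!/2) * m for some nonnegative integer m, since the Euler characteristic χ(PJ_G) = D - (2/(D-1)!) ω(G) of any PJ-factorization is an integer. -/
/-- The degree of a closed `(D+1)`-colored graph is always a multiple of `(D-1)!/2`:
since the Euler characteristic `χ = D - (2/(D-1)!) ω` of any PJ-factorization is an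
integer, `ω = ((D-1)!/2) m` for some nonnegative integer `m`. -/
theorem degree_multiple (D ω : ℕ) (hD : 2 ≤ D) (χ : ℤ)
    (hχ : (χ : ℚ) = (D : ℚ) - 2 / ((D - 1).factorial : ℚ) * ω) :
    ∃ m : ℕ, (ω : ℚ) = ((D - 1).factorial : ℚ) / 2 * m := by
  have hf : (0 : ℚ) < ((D - 1).factorial : ℚ) := by
    exact_mod_cast (D - 1).factorial_pos
  have key : (ω : ℚ) = ((D - 1).factorial : ℚ) / 2 * ((D : ℚ) - χ) := by
    field_simp at hχ ⊢
    linarith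
  have hk : (0 : ℚ) ≤ (D : ℚ) - χ := by
    by_contra h
    push_neg at h
    have : (ω : ℚ) < 0 := by
      rw [key]
      have : (0:ℚ) < ((D - 1).factorial : ℚ) / 2 := by positivity
      nlinarith
    exact absurd this (Nat.cast_nonneg ω).not_gt
  have hk' : (0 : ℤ) ≤ (D : ℤ) - χ := by exact_mod_cast hk
  refine ⟨((D : ℤ) - χ).toNat, ?_⟩
  rw [key]
  congr 1
  rw [show ((((D : ℤ) - χ).toNat : ℕ) : ℚ) = (((((D : ℤ) - χ).toNat : ℕ) : ℤ) : ℚ) from by push_cast; ring,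
    Int.toNat_of_nonneg hk']
  push_cast
  ring
end
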